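/- Completing-the-square risk inversion: let R, R_emp ≥ 0 and ε > 0 be real numbers satisfying (R − R_emp)/√R ≤ ε (with R > 0). Then R ≤ R_emp + (ε²/2)(1 + √(1 + 4 R_emp/ε²)). -/

import Mathlib

theorem stmt_12 (R Remp ε : ℝ) (hR : 0 < R) (hRemp : 0 ≤ Remp) (hε : 0 < ε)
    (h : (R - Remp) / Real.sqrt R ≤ ε) :
    R ≤ Remp + ε ^ 2 / 2 * (1 + Real.sqrt (1 + 4 * Remp / ε ^ 2)) := by
  set s := Real.sqrt R with hsdef
  have hs : 0 < s := Real.sqrt_pos.mpr hR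
  have hs2 : s ^ 2 = R := Real.sq_sqrt hR.le
  have h1 : R - Remp ≤ ε * s := by
    have := (div_le_iff₀ hs).mp h
    linarith
  set t := Real.sqrt (ε ^ 2 + 4 * Remp) with htdef
  have ht0 : 0 ≤ t := Real.sqrt_nonneg _
  have ht2 : t ^ 2 = ε ^ 2 + 4 * Remp := Real.sq_sqrt (by positivity)
  have hst : s ≤ (ε + t) / 2 := by nlinarith [sq_nonneg (2 * s - ε - t), sq_nonneg (2 * s - ε)]
  have hsqrt : Real.sqrt (1 + 4 * Remp / ε ^ 2) = t / ε := by
    rw [show (1 + 4 * Remp / ε ^ 2) = (ε ^ 2 + 4 * Remp) / ε ^ 2 by field_simp,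
      Real.sqrt_div (by positivity), Real.sqrt_sq hε.le]
  rw [hsqrt]
  have hR' : R ≤ ((ε + t) / 2) ^ 2 := by
    rw [← hs2]; exact pow_le_pow_left₀ hs.le hst 2
  have hexp : ((ε + t) / 2) ^ 2 = Remp + ε ^ 2 / 2 + ε * t / 2 :=
    by linear_combination ht2 / 4
  have hrhs : ε ^ 2 / 2 * (1 + t / ε) = ε ^ 2 / 2 + ε * t / 2 := by
    field_simp
  linarith
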